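/- arXiv:1905.12576 — 3 statements merged into one kernel-verified Lean document; each statement's English description precedes it below -/
import Mathlib

section
/- Fix 0 < ε, 0 < α ≤ 1 with ε/α < 1/4, integers d ≥ 2, s ≥ 2, ℓ > 0, and unit vectors h₀ ∈ ℝ^n, m₀ ∈ ℝ^p (‖h₀‖₂ = ‖m₀‖₂ = 1). If (h,m) ∈ S^{(1)}_ε, then ‖h‖₂‖m‖₂ ≤ 6; likewise, if (h,m) ∈ S^{(2)}_ε, then ‖h‖₂‖m‖₂ ≤ 6. -/
open Real Filter Set Matrix MeasureTheory ProbabilityTheory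

noncomputable section

/-- Euclidean dot product on `Fin n → ℝ`. -/
def dotp {n : ℕ} (x y : Fin n → ℝ) : ℝ := ∑ i, x i * y i

/-- Euclidean (ℓ²) norm on `Fin n → ℝ`. -/
def euclNorm {n : ℕ} (x : Fin n → ℝ) : ℝ := Real.sqrt (∑ i, (x i) ^ 2)

/-- The angle between two vectors. -/
def ang {n : ℕ} (x y : Fin n → ℝ) : ℝ :=
  Real.arccos (dotp x y / (euclNorm x * euclNorm y))

/-- Normalization of a vector. -/
def hatv {n : ℕ} (x : Fin n → ℝ) : Fin n → ℝ := (euclNorm x)⁻¹ • x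

/-- The matrix `M_{x̂↔ŷ}` sending `x̂ ↦ ŷ`, `ŷ ↦ x̂` and `span{x,y}ᗮ ∋ z ↦ 0`. -/
def Mmat {n : ℕ} (x y : Fin n → ℝ) : Matrix (Fin n) (Fin n) ℝ :=
  if Real.sin (ang x y) = 0 then Matrix.vecMulVec (hatv y) (hatv x)
  else ((Real.sin (ang x y)) ^ 2)⁻¹ •
    (Matrix.vecMulVec (hatv x) (hatv y) + Matrix.vecMulVec (hatv y) (hatv x)
      - Real.cos (ang x y) •
        (Matrix.vecMulVec (hatv x) (hatv x) + Matrix.vecMulVec (hatv y) (hatv y)))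

/-- The matrix `Q_{x,y}`. -/
def Qmat {n : ℕ} (x y : Fin n → ℝ) : Matrix (Fin n) (Fin n) ℝ :=
  ((Real.pi - ang x y) / (2 * Real.pi)) • (1 : Matrix (Fin n) (Fin n) ℝ)
    + (Real.sin (ang x y) / (2 * Real.pi)) • Mmat x y

/-- Spectral norm of a (rectangular) matrix. -/
def specNorm {m n : ℕ} (A : Matrix (Fin m) (Fin n) ℝ) : ℝ :=
  sSup {r : ℝ | ∃ v : Fin n → ℝ, euclNorm v ≤ 1 ∧ r = euclNorm (A.mulVec v)}

/-- `W_{+,v}`: zero out the rows of `W` whose inner product with `v` is not positive. -/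
def pospart {m n : ℕ} (W : Matrix (Fin m) (Fin n) ℝ) (v : Fin n → ℝ) :
    Matrix (Fin m) (Fin n) ℝ :=
  fun i j => if 0 < W.mulVec v i then W i j else 0

/-- The Weight Distribution Condition with constants `ε` and `α`. -/
def WDC {l n : ℕ} (ε α : ℝ) (W : Matrix (Fin l) (Fin n) ℝ) : Prop :=
  ∀ x y : Fin n → ℝ, x ≠ 0 → y ≠ 0 →
    specNorm ((pospart W x)ᵀ * pospart W y - α • Qmat x y) ≤ ε

/-- The joint Weight Distribution Condition with constants `ε` and `α`. -/
def jointWDC {l n p : ℕ} (ε α : ℝ) (B : Matrix (Fin l) (Fin n) ℝ)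
    (C : Matrix (Fin l) (Fin p) ℝ) : Prop :=
  ∀ h x : Fin n → ℝ, h ≠ 0 → x ≠ 0 → ∀ m y : Fin p → ℝ, m ≠ 0 → y ≠ 0 →
    specNorm ((pospart B h)ᵀ * Matrix.diagonal ((pospart C m).mulVec m * (pospart C y).mulVec y)
        * pospart B x - ((α / l) * dotp m ((Qmat m y).mulVec y)) • Qmat h x)
      ≤ (ε / l) * euclNorm m * euclNorm y ∧
    specNorm ((pospart C m)ᵀ * Matrix.diagonal ((pospart B h).mulVec h * (pospart B x).mulVec x)
        * pospart C y - ((α / l) * dotp h ((Qmat h x).mulVec x)) • Qmat m y)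
      ≤ (ε / l) * euclNorm h * euclNorm x

/-- `Λ_{d,+,h}` for the layer dimensions `nn` and weights `W`. -/
def LambdaMat (nn : ℕ → ℕ) (W : ∀ i : ℕ, Matrix (Fin (nn (i + 1))) (Fin (nn i)) ℝ)
    (h : Fin (nn 0) → ℝ) : (d : ℕ) → Matrix (Fin (nn d)) (Fin (nn 0)) ℝ
  | 0 => 1
  | (d + 1) => pospart (W d) ((LambdaMat nn W h d).mulVec h) * LambdaMat nn W h d

/-- The function `g(θ) = arccos(((π−θ)cos θ + sin θ)/π)`. -/
def gfun (θ : ℝ) : ℝ := Real.arccos (((Real.pi - θ) * Real.cos θ + Real.sin θ) / Real.pi)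

/-- `θ̌_i`: iterates of `g` starting at `π`. -/
def thetaChk : ℕ → ℝ
  | 0 => Real.pi
  | (i + 1) => gfun (thetaChk i)

/-- `ρ_a`. -/
def rhoConst (a : ℕ) : ℝ :=
  ∑ i ∈ Finset.Ico 1 a, (Real.sin (thetaChk i) / Real.pi) *
    ∏ j ∈ Finset.Ico (i + 1) a, (Real.pi - thetaChk j) / Real.pi

/-- `θ̄_i`: iterates of `g` starting at the angle between `p` and `q`. -/
def thetaBar {n : ℕ} (p q : Fin n → ℝ) : ℕ → ℝ
  | 0 => ang p q
  | (i + 1) => gfun (thetaBar p q i)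

/-- `t̃_{p,q}` with `a` layers. -/
def ttil {n : ℕ} (a : ℕ) (p q : Fin n → ℝ) : Fin n → ℝ :=
  ((2 : ℝ) ^ a)⁻¹ •
    ((∏ i ∈ Finset.range a, (Real.pi - thetaBar p q i) / Real.pi) • q
      + (∑ i ∈ Finset.range a, (Real.sin (thetaBar p q i) / Real.pi) *
          (∏ j ∈ Finset.Ico (i + 1) a, (Real.pi - thetaBar p q j) / Real.pi) *
          (euclNorm q / euclNorm p)) • p)

/-- The hyperbolic neighborhood `A_{ε,(h̃,m̃)}`. -/
def Aset {n p : ℕ} (ε : ℝ) (ht : Fin n → ℝ) (mt : Fin p → ℝ) :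
    Set ((Fin n → ℝ) × (Fin p → ℝ)) :=
  {hm | ∃ c : ℝ, 0 < c ∧
    Real.sqrt (euclNorm (hm.1 - c • ht) ^ 2 + euclNorm (hm.2 - c⁻¹ • mt) ^ 2)
      ≤ ε * Real.sqrt (euclNorm (c • ht) ^ 2 + euclNorm (c⁻¹ • mt) ^ 2)}

/-- The set `K = {(h,0)} ∪ {(0,m)}`. -/
def Kset (n p : ℕ) : Set ((Fin n → ℝ) × (Fin p → ℝ)) :=
  {hm | hm.2 = 0} ∪ {hm | hm.1 = 0}

/-- One-sided directional derivative. -/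
def HasOneSidedDeriv {n p : ℕ} (F : ((Fin n → ℝ) × (Fin p → ℝ)) → ℝ)
    (z v : (Fin n → ℝ) × (Fin p → ℝ)) (D : ℝ) : Prop :=
  Filter.Tendsto (fun t : ℝ => (F (z + t • v) - F z) / t) (nhdsWithin 0 (Set.Ioi 0)) (nhds D)
/-- The vector `t^{(1)}_{(h,m)}`. -/
def tvec1 {n p : ℕ} (α l : ℝ) (d s : ℕ) (h0 : Fin n → ℝ) (m0 : Fin p → ℝ)
    (h : Fin n → ℝ) (m : Fin p → ℝ) : Fin n → ℝ :=
  (α / (2 ^ (d + s) * l) * euclNorm m ^ 2) • h - (α / l * dotp m (ttil s m m0)) • ttil d h h0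

/-- The vector `t^{(2)}_{(h,m)}`. -/
def tvec2 {n p : ℕ} (α l : ℝ) (d s : ℕ) (h0 : Fin n → ℝ) (m0 : Fin p → ℝ)
    (h : Fin n → ℝ) (m : Fin p → ℝ) : Fin p → ℝ :=
  (α / (2 ^ (d + s) * l) * euclNorm h ^ 2) • m - (α / l * dotp h (ttil d h h0)) • ttil s m m0

/-- The set `S^{(1)}_ε`. -/
def Sset1 {n p : ℕ} (ε α l : ℝ) (d s : ℕ) (h0 : Fin n → ℝ) (m0 : Fin p → ℝ) :
    Set ((Fin n → ℝ) × (Fin p → ℝ)) :=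
  {hm | hm ∉ Kset n p ∧
    euclNorm (tvec1 α l d s h0 m0 hm.1 hm.2) / euclNorm hm.2
      ≤ ε * max (euclNorm hm.1 * euclNorm hm.2) (euclNorm h0 * euclNorm m0) / (2 ^ (d + s) * l)}

/-- The set `S^{(2)}_ε`. -/
def Sset2 {n p : ℕ} (ε α l : ℝ) (d s : ℕ) (h0 : Fin n → ℝ) (m0 : Fin p → ℝ) :
    Set ((Fin n → ℝ) × (Fin p → ℝ)) :=
  {hm | hm ∉ Kset n p ∧
    euclNorm (tvec2 α l d s h0 m0 hm.1 hm.2) / euclNorm hm.1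
      ≤ ε * max (euclNorm hm.1 * euclNorm hm.2) (euclNorm h0 * euclNorm m0) / (2 ^ (d + s) * l)}


/-! ### Auxiliary lemmas for statement 6 -/

lemma euclNorm_eq' {n : ℕ} (x : Fin n → ℝ) :
    euclNorm x = ‖(WithLp.equiv 2 (Fin n → ℝ)).symm x‖ := by
  simp [euclNorm, EuclideanSpace.norm_eq, Real.norm_eq_abs, sq_abs]

lemma euclNorm_nonneg' {n : ℕ} (x : Fin n → ℝ) : 0 ≤ euclNorm x := by
  rw [euclNorm_eq']; exact norm_nonneg _

lemma euclNorm_smul' {n : ℕ} (c : ℝ) (x : Fin n → ℝ) :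
    euclNorm (c • x) = |c| * euclNorm x := by
  rw [euclNorm_eq', euclNorm_eq', WithLp.equiv_symm_apply, WithLp.toLp_smul, norm_smul, Real.norm_eq_abs]

lemma euclNorm_sub_ge' {n : ℕ} (x y : Fin n → ℝ) :
    euclNorm x - euclNorm y ≤ euclNorm (x - y) := by
  rw [euclNorm_eq', euclNorm_eq', euclNorm_eq', WithLp.equiv_symm_apply, WithLp.toLp_sub]
  exact norm_sub_norm_le _ _

lemma euclNorm_pos' {n : ℕ} {x : Fin n → ℝ} (hx : x ≠ 0) : 0 < euclNorm x := by
  rw [euclNorm_eq', norm_pos_iff]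
  simpa using hx

lemma abs_dotp_le' {n : ℕ} (x y : Fin n → ℝ) :
    |dotp x y| ≤ euclNorm x * euclNorm y := by
  rw [euclNorm_eq', euclNorm_eq']
  have h := abs_real_inner_le_norm ((WithLp.equiv 2 (Fin n → ℝ)).symm x)
    ((WithLp.equiv 2 (Fin n → ℝ)).symm y)
  have h2 : dotp x y = inner ℝ ((WithLp.equiv 2 (Fin n → ℝ)).symm x)
      ((WithLp.equiv 2 (Fin n → ℝ)).symm y) := by
    simp [dotp, PiLp.inner_apply, RCLike.inner_apply, conj_trivial, mul_comm]
  rw [h2]; exact h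

lemma thetaBar_mem' {n : ℕ} (p q : Fin n → ℝ) (i : ℕ) :
    thetaBar p q i ∈ Set.Icc 0 Real.pi := by
  cases i with
  | zero => exact ⟨Real.arccos_nonneg _, Real.arccos_le_pi _⟩
  | succ i => exact ⟨Real.arccos_nonneg _, Real.arccos_le_pi _⟩

lemma cfac_mem' {n : ℕ} (p q : Fin n → ℝ) (i : ℕ) :
    (Real.pi - thetaBar p q i) / Real.pi ∈ Set.Icc (0:ℝ) 1 := by
  obtain ⟨h1, h2⟩ := thetaBar_mem' p q i
  constructor
  · exact div_nonneg (by linarith) Real.pi_pos.le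
  · rw [div_le_one Real.pi_pos]; linarith

lemma prod_c_nonneg' {n : ℕ} (p q : Fin n → ℝ) (s : Finset ℕ) :
    0 ≤ ∏ j ∈ s, (Real.pi - thetaBar p q j) / Real.pi :=
  Finset.prod_nonneg fun j _ => (cfac_mem' p q j).1

lemma bfac_mem' {n : ℕ} (p q : Fin n → ℝ) (i : ℕ) :
    Real.sin (thetaBar p q i) / Real.pi ∈
      Set.Icc (0:ℝ) (1 - (Real.pi - thetaBar p q i) / Real.pi) := by
  obtain ⟨h1, h2⟩ := thetaBar_mem' p q i
  have hπ := Real.pi_pos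
  constructor
  · exact div_nonneg (Real.sin_nonneg_of_nonneg_of_le_pi h1 h2) hπ.le
  · have hsin : Real.sin (thetaBar p q i) ≤ thetaBar p q i := Real.sin_le h1
    rw [div_le_iff₀ hπ]
    field_simp
    linarith

lemma sum_add_prod_le_one' {n : ℕ} (p q : Fin n → ℝ) (a : ℕ) :
    (∑ i ∈ Finset.range a, Real.sin (thetaBar p q i) / Real.pi *
      ∏ j ∈ Finset.Ico (i+1) a, (Real.pi - thetaBar p q j) / Real.pi)
    + ∏ i ∈ Finset.range a, (Real.pi - thetaBar p q i) / Real.pi ≤ 1 := by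
  induction a with
  | zero => simp
  | succ a ih =>
    have hca := cfac_mem' p q a
    have hba := bfac_mem' p q a
    have hS : (∑ i ∈ Finset.range (a+1), Real.sin (thetaBar p q i) / Real.pi *
        ∏ j ∈ Finset.Ico (i+1) (a+1), (Real.pi - thetaBar p q j) / Real.pi)
        = (∑ i ∈ Finset.range a, Real.sin (thetaBar p q i) / Real.pi *
            ∏ j ∈ Finset.Ico (i+1) a, (Real.pi - thetaBar p q j) / Real.pi) *
            ((Real.pi - thetaBar p q a) / Real.pi)
          + Real.sin (thetaBar p q a) / Real.pi := by
      rw [Finset.sum_range_succ, Finset.Ico_self, Finset.prod_empty, mul_one,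
        Finset.sum_mul]
      congr 1
      apply Finset.sum_congr rfl
      intro i hi
      rw [Finset.mem_range] at hi
      rw [Finset.prod_Ico_succ_top (by omega : i + 1 ≤ a), mul_assoc]
    rw [hS, Finset.prod_range_succ]
    have hSnn : 0 ≤ ∑ i ∈ Finset.range a, Real.sin (thetaBar p q i) / Real.pi *
        ∏ j ∈ Finset.Ico (i+1) a, (Real.pi - thetaBar p q j) / Real.pi :=
      Finset.sum_nonneg fun i _ =>
        mul_nonneg (bfac_mem' p q i).1 (prod_c_nonneg' p q _)
    nlinarith [ih, hca.1, hca.2, hba.1, hba.2, prod_c_nonneg' p q (Finset.range a)]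

lemma sum_S_nonneg' {n : ℕ} (p q : Fin n → ℝ) (a : ℕ) :
    0 ≤ ∑ i ∈ Finset.range a, Real.sin (thetaBar p q i) / Real.pi *
      ∏ j ∈ Finset.Ico (i+1) a, (Real.pi - thetaBar p q j) / Real.pi :=
  Finset.sum_nonneg fun i _ => mul_nonneg (bfac_mem' p q i).1 (prod_c_nonneg' p q _)

lemma euclNorm_add_le' {n : ℕ} (x y : Fin n → ℝ) :
    euclNorm (x + y) ≤ euclNorm x + euclNorm y := by
  rw [euclNorm_eq', euclNorm_eq', euclNorm_eq', WithLp.equiv_symm_apply, WithLp.toLp_add]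
  exact norm_add_le _ _

lemma euclNorm_ttil_le {n : ℕ} (a : ℕ) (p q : Fin n → ℝ) :
    euclNorm (ttil a p q) ≤ euclNorm q / 2 ^ a := by
  set P := ∏ i ∈ Finset.range a, (Real.pi - thetaBar p q i) / Real.pi with hPdef
  set S := ∑ i ∈ Finset.range a, Real.sin (thetaBar p q i) / Real.pi *
      ∏ j ∈ Finset.Ico (i+1) a, (Real.pi - thetaBar p q j) / Real.pi with hSdef
  have hP0 : 0 ≤ P := prod_c_nonneg' p q _
  have hS0 : 0 ≤ S := sum_S_nonneg' p q a
  have hPS : P + S ≤ 1 := by have := sum_add_prod_le_one' p q a; linarith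
  have hrw : ttil a p q
      = ((2:ℝ)^a)⁻¹ • (P • q + (S * (euclNorm q / euclNorm p)) • p) := by
    unfold ttil
    rw [← Finset.sum_mul]
  have hq0 : 0 ≤ euclNorm q := euclNorm_nonneg' q
  have hp0 : 0 ≤ euclNorm p := euclNorm_nonneg' p
  have hterm : S * (euclNorm q / euclNorm p) * euclNorm p ≤ S * euclNorm q := by
    rcases eq_or_ne (euclNorm p) 0 with h | h
    · rw [h, mul_zero]
      exact mul_nonneg hS0 hq0
    · have he : S * (euclNorm q / euclNorm p) * euclNorm p = S * euclNorm q := by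
        field_simp
      rw [he]
  have htri : euclNorm (P • q + (S * (euclNorm q / euclNorm p)) • p)
      ≤ P * euclNorm q + S * (euclNorm q / euclNorm p) * euclNorm p := by
    have t := euclNorm_add_le' (P • q) ((S * (euclNorm q / euclNorm p)) • p)
    rw [euclNorm_smul', euclNorm_smul', abs_of_nonneg hP0,
      abs_of_nonneg (mul_nonneg hS0 (div_nonneg hq0 hp0))] at t
    exact t
  have hbound : P * euclNorm q + S * (euclNorm q / euclNorm p) * euclNorm p
      ≤ euclNorm q := by
    nlinarith [mul_le_mul_of_nonneg_right hPS hq0]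
  have hinv : (0:ℝ) ≤ ((2:ℝ)^a)⁻¹ := by positivity
  have hgoal : euclNorm q / 2 ^ a = ((2:ℝ)^a)⁻¹ * euclNorm q := by ring
  rw [hrw, euclNorm_smul', abs_of_nonneg hinv, hgoal]
  exact mul_le_mul_of_nonneg_left (htri.trans hbound) hinv

lemma tvec1_lower {n p : ℕ} (α l : ℝ) (d s : ℕ) (h0 : Fin n → ℝ) (m0 : Fin p → ℝ)
    (hα0 : 0 < α) (hl : 0 < l) (hh0 : euclNorm h0 = 1) (hm0 : euclNorm m0 = 1)
    (h : Fin n → ℝ) (m : Fin p → ℝ) :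
    α / (2 ^ (d + s) * l) * euclNorm m * (euclNorm h * euclNorm m - 1)
      ≤ euclNorm (tvec1 α l d s h0 m0 h m) := by
  have hT1 : euclNorm (ttil d h h0) ≤ 1 / 2 ^ d := by
    simpa [hh0] using euclNorm_ttil_le d h h0
  have hT2 : euclNorm (ttil s m m0) ≤ 1 / 2 ^ s := by
    simpa [hm0] using euclNorm_ttil_le s m m0
  have hdot : |dotp m (ttil s m m0)| ≤ euclNorm m * (1 / 2 ^ s) :=
    (abs_dotp_le' m _).trans
      (mul_le_mul_of_nonneg_left hT2 (euclNorm_nonneg' m))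
  have h1 := euclNorm_sub_ge' ((α / (2 ^ (d + s) * l) * euclNorm m ^ 2) • h)
    ((α / l * dotp m (ttil s m m0)) • ttil d h h0)
  rw [euclNorm_smul', euclNorm_smul'] at h1
  have hA : 0 < α / (2 ^ (d + s) * l) := div_pos hα0 (by positivity)
  have hαl : 0 < α / l := div_pos hα0 hl
  rw [abs_of_nonneg (mul_nonneg hA.le (sq_nonneg _)), abs_mul,
    abs_of_nonneg hαl.le] at h1
  have hT10 : 0 ≤ euclNorm (ttil d h h0) := euclNorm_nonneg' _
  have key : α / l * |dotp m (ttil s m m0)| * euclNorm (ttil d h h0)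
      ≤ α / l * (euclNorm m * (1 / 2 ^ s)) * (1 / 2 ^ d) := by
    exact mul_le_mul (mul_le_mul_of_nonneg_left hdot hαl.le) hT1 hT10
      (mul_nonneg hαl.le (mul_nonneg (euclNorm_nonneg' m) (by positivity)))
  have heq : α / l * (euclNorm m * (1 / 2 ^ s)) * (1 / 2 ^ d)
      = α / (2 ^ (d + s) * l) * euclNorm m := by
    simp only [pow_add, div_eq_mul_inv, mul_inv, one_mul]
    ring
  rw [heq] at key
  show α / (2 ^ (d + s) * l) * euclNorm m * (euclNorm h * euclNorm m - 1)
      ≤ euclNorm ((α / (2 ^ (d + s) * l) * euclNorm m ^ 2) • h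
        - (α / l * dotp m (ttil s m m0)) • ttil d h h0)
  nlinarith [h1, key]

lemma arith_lemma (ε α C X : ℝ) (hC : 0 < C) (hα0 : 0 < α) (hε0 : 0 < ε)
    (hεα : ε / α < 1 / 4) (hX0 : 0 ≤ X)
    (H : α / C * (X - 1) ≤ ε * max X 1 / C) : X ≤ 6 := by
  have hε : ε < 1 / 4 * α := (div_lt_iff₀ hα0).mp hεα
  by_cases hX1 : X ≤ 1
  · linarith
  · have hmax : max X 1 = X := max_eq_left (by linarith)
    rw [hmax, div_mul_eq_mul_div] at H
    have h5 : α * (X - 1) ≤ ε * X := by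
      have := mul_le_mul_of_nonneg_right H hC.le
      rw [div_mul_cancel₀ _ hC.ne', div_mul_cancel₀ _ hC.ne'] at this
      exact this
    nlinarith [mul_lt_mul_of_pos_right hε (show (0:ℝ) < X by linarith),
      mul_pos hα0 (show (0:ℝ) < X by linarith)]

lemma main1 {n p : ℕ} (ε α l : ℝ) (d s : ℕ) (h0 : Fin n → ℝ) (m0 : Fin p → ℝ)
    (hε0 : 0 < ε) (hα0 : 0 < α) (hεα : ε / α < 1 / 4) (hl : 0 < l)
    (hh0 : euclNorm h0 = 1) (hm0 : euclNorm m0 = 1)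
    (h : Fin n → ℝ) (m : Fin p → ℝ) (hm_ne : m ≠ 0)
    (hineq : euclNorm (tvec1 α l d s h0 m0 h m) / euclNorm m
      ≤ ε * max (euclNorm h * euclNorm m) (euclNorm h0 * euclNorm m0)
          / (2 ^ (d + s) * l)) :
    euclNorm h * euclNorm m ≤ 6 := by
  have hNm : 0 < euclNorm m := euclNorm_pos' hm_ne
  have hC : (0:ℝ) < 2 ^ (d + s) * l := by positivity
  rw [hh0, hm0, one_mul] at hineq
  have hlow := tvec1_lower α l d s h0 m0 hα0 hl hh0 hm0 h m
  have h3 : α / (2 ^ (d + s) * l) * euclNorm m * (euclNorm h * euclNorm m - 1)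
        / euclNorm m
      ≤ euclNorm (tvec1 α l d s h0 m0 h m) / euclNorm m :=
    (div_le_div_iff_of_pos_right hNm).mpr hlow
  have h4 : α / (2 ^ (d + s) * l) * euclNorm m * (euclNorm h * euclNorm m - 1)
        / euclNorm m
      = α / (2 ^ (d + s) * l) * (euclNorm h * euclNorm m - 1) := by
    field_simp
  rw [h4] at h3
  exact arith_lemma ε α _ _ hC hα0 hε0 hεα
    (mul_nonneg (euclNorm_nonneg' h) (euclNorm_nonneg' m)) (h3.trans hineq)

lemma tvec2_eq_tvec1 {n p : ℕ} (α l : ℝ) (d s : ℕ) (h0 : Fin n → ℝ)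
    (m0 : Fin p → ℝ) (h : Fin n → ℝ) (m : Fin p → ℝ) :
    tvec2 α l d s h0 m0 h m = tvec1 α l s d m0 h0 m h := by
  unfold tvec1 tvec2
  rw [Nat.add_comm s d]

/-- points of `S^{(1)}_ε` and of `S^{(2)}_ε` satisfy `‖h‖‖m‖ ≤ 6`. -/
theorem statement_6
    {n p : ℕ} (ε α l : ℝ) (d s : ℕ) (h0 : Fin n → ℝ) (m0 : Fin p → ℝ)
    (hε0 : 0 < ε) (hα0 : 0 < α) (hα1 : α ≤ 1) (hεα : ε / α < 1 / 4)
    (hd : 2 ≤ d) (hs : 2 ≤ s) (hl : 0 < l)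
    (hh0 : euclNorm h0 = 1) (hm0 : euclNorm m0 = 1) :
    (∀ hm : (Fin n → ℝ) × (Fin p → ℝ), hm ∈ Sset1 ε α l d s h0 m0 →
        euclNorm hm.1 * euclNorm hm.2 ≤ 6) ∧
    (∀ hm : (Fin n → ℝ) × (Fin p → ℝ), hm ∈ Sset2 ε α l d s h0 m0 →
        euclNorm hm.1 * euclNorm hm.2 ≤ 6) := by
  have hKne : ∀ hm : (Fin n → ℝ) × (Fin p → ℝ), hm ∉ Kset n p →
      hm.1 ≠ 0 ∧ hm.2 ≠ 0 := by
    intro hm hK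
    simp only [Kset, Set.mem_union, Set.mem_setOf_eq, not_or] at hK
    exact ⟨hK.2, hK.1⟩
  constructor
  · rintro hm ⟨hK, hineq⟩
    exact main1 ε α l d s h0 m0 hε0 hα0 hεα hl hh0 hm0 hm.1 hm.2
      (hKne hm hK).2 hineq
  · rintro hm ⟨hK, hineq⟩
    rw [tvec2_eq_tvec1, Nat.add_comm d s, mul_comm (euclNorm hm.1),
      mul_comm (euclNorm h0)] at hineq
    have := main1 ε α l s d m0 h0 hε0 hα0 hεα hl hm0 hh0 hm.2 hm.1
      (hKne hm hK).1 hineq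
    rw [mul_comm]
    exact this

end
end

section
/- Fix ε > 0, 0 < α₁ ≤ 1, 0 < α₂ ≤ 1 with 4π²ε/(α₁α₂) < 1, and integers d ≥ 2, s ≥ 2. Suppose W_i^{(1)} ∈ ℝ^{n_i×n_{i−1}} for i = 1,…,d−1 and W_i^{(2)} ∈ ℝ^{p_i×p_{i−1}} for i = 1,…,s−1 satisfy the WDC with constants ε and 1, W_d^{(1)} satisfies the WDC with constants ε and α₁, W_s^{(2)} satisfies the WDC with constants ε and α₂, and (W_d^{(1)}, W_s^{(2)}) satisfy the joint-WDC with constants ε and α₁α₂. Then every point of K = {(h,0) : h ∈ ℝ^n} ∪ {(0,m) : m ∈ ℝ^p} is a local maximizer of f in the sense that for every (h,m) ∈ K and every direction (x,y) ∈ ℝ^n×ℝ^p, the one-sided directional derivative satisfies D_{(x,y)}f(h,m) ≤ 0. -/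
open Real Filter Set Matrix MeasureTheory ProbabilityTheory
open scoped NNReal ENNReal

noncomputable section

/-- The full matrix `Λ_{d,+,h}` of a `d`-layer network whose inner weights are `W` and whose
last layer is `Wlast : ℝ^{ℓ×n_{d−1}}`. -/
def LamFull (nn : ℕ → ℕ) (d l : ℕ) (W : ∀ i : ℕ, Matrix (Fin (nn (i + 1))) (Fin (nn i)) ℝ)
    (Wlast : Matrix (Fin l) (Fin (nn (d - 1))) ℝ) (h : Fin (nn 0) → ℝ) :
    Matrix (Fin l) (Fin (nn 0)) ℝ :=
  pospart Wlast ((LambdaMat nn W h (d - 1)).mulVec h) * LambdaMat nn W h (d - 1)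

/-- The output `G(h) = relu(W_d ⋯ relu(W_1 h)⋯) = Λ_{d,+,h} h` of the network. -/
def Gnet (nn : ℕ → ℕ) (d l : ℕ) (W : ∀ i : ℕ, Matrix (Fin (nn (i + 1))) (Fin (nn i)) ℝ)
    (Wlast : Matrix (Fin l) (Fin (nn (d - 1))) ℝ) (h : Fin (nn 0) → ℝ) : Fin l → ℝ :=
  (LamFull nn d l W Wlast h).mulVec h

/-- The empirical risk objective
`f(h,m) = ½‖G¹(h₀)⊙G²(m₀) − G¹(h)⊙G²(m)‖₂²`. -/
def fobj (nn pp : ℕ → ℕ) (d s l : ℕ)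
    (W1 : ∀ i : ℕ, Matrix (Fin (nn (i + 1))) (Fin (nn i)) ℝ)
    (Wd : Matrix (Fin l) (Fin (nn (d - 1))) ℝ)
    (W2 : ∀ i : ℕ, Matrix (Fin (pp (i + 1))) (Fin (pp i)) ℝ)
    (Ws : Matrix (Fin l) (Fin (pp (s - 1))) ℝ)
    (h0 : Fin (nn 0) → ℝ) (m0 : Fin (pp 0) → ℝ) :
    ((Fin (nn 0) → ℝ) × (Fin (pp 0) → ℝ)) → ℝ :=
  fun z => (1 / 2) * (euclNorm (Gnet nn d l W1 Wd h0 * Gnet pp s l W2 Ws m0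
    - Gnet nn d l W1 Wd z.1 * Gnet pp s l W2 Ws z.2)) ^ 2

/-- At `hm`, for every direction `w` along which `F` is eventually differentiable and every
pair of one-sided limits `g1, g2` of the two partial gradients of `F` from direction `w`,
one of `−(g1,0)` and `−(0,g2)` is a strict descent direction for `F`. -/
def DescentAt {n p : ℕ} (F : ((Fin n → ℝ) × (Fin p → ℝ)) → ℝ)
    (hm : (Fin n → ℝ) × (Fin p → ℝ)) : Prop :=
  ∀ w : (Fin n → ℝ) × (Fin p → ℝ),
    (∀ᶠ δ in nhdsWithin (0 : ℝ) (Set.Ioi 0), DifferentiableAt ℝ F (hm + δ • w)) →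
    ∀ (g1 : Fin n → ℝ) (g2 : Fin p → ℝ),
      Filter.Tendsto (fun δ : ℝ => fun j => fderiv ℝ F (hm + δ • w) (Pi.single j 1, 0))
        (nhdsWithin 0 (Set.Ioi 0)) (nhds g1) →
      Filter.Tendsto (fun δ : ℝ => fun j => fderiv ℝ F (hm + δ • w) (0, Pi.single j 1))
        (nhdsWithin 0 (Set.Ioi 0)) (nhds g2) →
      (∃ D < 0, HasOneSidedDeriv F hm (-(g1, (0 : Fin p → ℝ))) D) ∨
      (∃ D < 0, HasOneSidedDeriv F hm (-((0 : Fin n → ℝ), g2)) D)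

lemma euclNorm_sq {n : ℕ} (w : Fin n → ℝ) : euclNorm w ^ 2 = ∑ i, (w i) ^ 2 :=
  Real.sq_sqrt (Finset.sum_nonneg fun i _ => sq_nonneg _)

lemma pospart_smul {m n : ℕ} (W : Matrix (Fin m) (Fin n) ℝ) (v : Fin n → ℝ) {t : ℝ}
    (ht : 0 < t) : pospart W (t • v) = pospart W v := by
  funext i j
  have h2 : (0 < W.mulVec (t • v) i) ↔ 0 < W.mulVec v i := by
    rw [Matrix.mulVec_smul]
    simp only [Pi.smul_apply, smul_eq_mul]
    constructor
    · intro hh; nlinarith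
    · intro hh; exact mul_pos ht hh
  simp only [pospart, h2]

lemma LambdaMat_smul (nn : ℕ → ℕ) (W : ∀ i : ℕ, Matrix (Fin (nn (i + 1))) (Fin (nn i)) ℝ)
    (h : Fin (nn 0) → ℝ) {t : ℝ} (ht : 0 < t) (k : ℕ) :
    LambdaMat nn W (t • h) k = LambdaMat nn W h k := by
  induction k with
  | zero => rfl
  | succ k ih => simp only [LambdaMat, ih, Matrix.mulVec_smul, pospart_smul _ _ ht]

lemma Gnet_smul (nn : ℕ → ℕ) (d l : ℕ) (W : ∀ i : ℕ, Matrix (Fin (nn (i + 1))) (Fin (nn i)) ℝ)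
    (Wlast : Matrix (Fin l) (Fin (nn (d - 1))) ℝ) (h : Fin (nn 0) → ℝ) {t : ℝ} (ht : 0 < t) :
    Gnet nn d l W Wlast (t • h) = t • Gnet nn d l W Wlast h := by
  unfold Gnet LamFull
  rw [LambdaMat_smul nn W h ht, Matrix.mulVec_smul (LambdaMat nn W h (d - 1)),
    pospart_smul _ _ ht, Matrix.mulVec_smul]

lemma Gnet_zero (nn : ℕ → ℕ) (d l : ℕ) (W : ∀ i : ℕ, Matrix (Fin (nn (i + 1))) (Fin (nn i)) ℝ)
    (Wlast : Matrix (Fin l) (Fin (nn (d - 1))) ℝ) :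
    Gnet nn d l W Wlast 0 = 0 := by
  unfold Gnet
  rw [Matrix.mulVec_zero]

lemma pospart_mulVec_self {m n : ℕ} (W : Matrix (Fin m) (Fin n) ℝ) (v : Fin n → ℝ) :
    (pospart W v).mulVec v = fun i => max (W.mulVec v i) 0 := by
  funext i
  simp only [Matrix.mulVec, dotProduct, pospart]
  by_cases h : (0 : ℝ) < ∑ x, W i x * v x
  · simp only [if_pos h]
    rw [max_eq_left h.le]
  · simp only [if_neg h, zero_mul, Finset.sum_const_zero]
    rw [max_eq_right (not_lt.mp h)]

lemma Gnet_eq_max (nn : ℕ → ℕ) (d l : ℕ) (W : ∀ i : ℕ, Matrix (Fin (nn (i + 1))) (Fin (nn i)) ℝ)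
    (Wlast : Matrix (Fin l) (Fin (nn (d - 1))) ℝ) (h : Fin (nn 0) → ℝ) :
    Gnet nn d l W Wlast h
      = fun i => max (Wlast.mulVec ((LambdaMat nn W h (d - 1)).mulVec h) i) 0 := by
  unfold Gnet LamFull
  rw [← Matrix.mulVec_mulVec, pospart_mulVec_self]

lemma Gnet_nonneg (nn : ℕ → ℕ) (d l : ℕ) (W : ∀ i : ℕ, Matrix (Fin (nn (i + 1))) (Fin (nn i)) ℝ)
    (Wlast : Matrix (Fin l) (Fin (nn (d - 1))) ℝ) (h : Fin (nn 0) → ℝ) (i : Fin l) :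
    0 ≤ Gnet nn d l W Wlast h i := by
  rw [Gnet_eq_max]
  exact le_max_right _ _

lemma continuous_mulVec' {m n : ℕ} (W : Matrix (Fin m) (Fin n) ℝ) :
    Continuous fun v : Fin n → ℝ => W.mulVec v := by
  refine continuous_pi fun i => ?_
  simp only [Matrix.mulVec, dotProduct]
  exact continuous_finset_sum _ fun j _ => continuous_const.mul (continuous_apply j)

lemma continuous_Lambda (nn : ℕ → ℕ) (W : ∀ i : ℕ, Matrix (Fin (nn (i + 1))) (Fin (nn i)) ℝ)
    (k : ℕ) : Continuous fun h => (LambdaMat nn W h k).mulVec h := by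
  induction k with
  | zero =>
    have : (fun h : Fin (nn 0) → ℝ => (LambdaMat nn W h 0).mulVec h) = fun h => h := by
      funext h; rw [show LambdaMat nn W h 0 = 1 from rfl, Matrix.one_mulVec]
    rw [this]; exact continuous_id
  | succ k ih =>
    have heq : (fun h => (LambdaMat nn W h (k + 1)).mulVec h)
        = fun h => fun i => max ((W k).mulVec ((LambdaMat nn W h k).mulVec h) i) 0 := by
      funext h
      show (LambdaMat nn W h (k + 1)).mulVec h = _
      rw [LambdaMat, ← Matrix.mulVec_mulVec, pospart_mulVec_self]
    rw [heq]
    exact continuous_pi fun i =>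
      ((continuous_apply i).comp ((continuous_mulVec' _).comp ih)).max continuous_const

lemma continuous_Gnet (nn : ℕ → ℕ) (d l : ℕ)
    (W : ∀ i : ℕ, Matrix (Fin (nn (i + 1))) (Fin (nn i)) ℝ)
    (Wlast : Matrix (Fin l) (Fin (nn (d - 1))) ℝ) :
    Continuous (Gnet nn d l W Wlast) := by
  have heq : Gnet nn d l W Wlast
      = fun h => fun i => max (Wlast.mulVec ((LambdaMat nn W h (d - 1)).mulVec h) i) 0 := by
    funext h; rw [Gnet_eq_max]
  rw [heq]
  exact continuous_pi fun i =>
    ((continuous_apply i).comp ((continuous_mulVec' _).comp (continuous_Lambda nn W _))).max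
      continuous_const

lemma one_sided_aux {l n p : ℕ} (F : ((Fin n → ℝ) × (Fin p → ℝ)) → ℝ)
    (hm v : (Fin n → ℝ) × (Fin p → ℝ)) (c : Fin l → ℝ) (g : ℝ → Fin l → ℝ)
    (hg : Continuous g) (hc : ∀ i, 0 ≤ c i) (hg0 : ∀ i, 0 ≤ g 0 i)
    (hF : ∀ t : ℝ, 0 < t → F (hm + t • v) = (1 / 2) * ∑ i, (c i - t * g t i) ^ 2)
    (hF0 : F hm = (1 / 2) * ∑ i, (c i) ^ 2) :
    ∃ D ≤ 0, HasOneSidedDeriv F hm v D := by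
  refine ⟨-∑ i, c i * g 0 i,
    neg_nonpos.mpr (Finset.sum_nonneg fun i _ => mul_nonneg (hc i) (hg0 i)), ?_⟩
  set φ : ℝ → ℝ := fun t => -∑ i, c i * g t i + t / 2 * ∑ i, (g t i) ^ 2 with hφdef
  have hφ : Continuous φ := by
    refine Continuous.add ?_ ?_
    · exact (continuous_finset_sum _ fun i _ =>
        continuous_const.mul ((continuous_apply i).comp hg)).neg
    · exact (continuous_id.div_const 2).mul
        (continuous_finset_sum _ fun i _ => ((continuous_apply i).comp hg).pow 2)
  have h1 : Filter.Tendsto φ (nhdsWithin 0 (Set.Ioi 0)) (nhds (-∑ i, c i * g 0 i)) := by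
    have h2 : Filter.Tendsto φ (nhdsWithin 0 (Set.Ioi 0)) (nhds (φ 0)) :=
      (hφ.tendsto 0).mono_left nhdsWithin_le_nhds
    simpa [hφdef] using h2
  unfold HasOneSidedDeriv
  refine Tendsto.congr' ?_ h1
  filter_upwards [self_mem_nhdsWithin] with t ht
  have ht : (0 : ℝ) < t := ht
  have e1 : ∑ i, (c i - t * g t i) ^ 2
      = (∑ i, (c i) ^ 2) - 2 * t * (∑ i, c i * g t i) + t ^ 2 * (∑ i, (g t i) ^ 2) := by
    rw [Finset.mul_sum, Finset.mul_sum, ← Finset.sum_sub_distrib, ← Finset.sum_add_distrib]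
    exact Finset.sum_congr rfl fun i _ => by ring
  rw [hφdef]
  simp only
  rw [hF t ht, hF0, e1]
  field_simp
  ring

/-- the points of `K` are local maximizers. -/
theorem statement_17
    (ε α₁ α₂ : ℝ) (d s l : ℕ) (nn pp : ℕ → ℕ)
    (W1 : ∀ i : ℕ, Matrix (Fin (nn (i + 1))) (Fin (nn i)) ℝ)
    (Wd : Matrix (Fin l) (Fin (nn (d - 1))) ℝ)
    (W2 : ∀ i : ℕ, Matrix (Fin (pp (i + 1))) (Fin (pp i)) ℝ)
    (Ws : Matrix (Fin l) (Fin (pp (s - 1))) ℝ)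
    (h0 : Fin (nn 0) → ℝ) (m0 : Fin (pp 0) → ℝ)
    (hε0 : 0 < ε) (hα₁0 : 0 < α₁) (hα₁1 : α₁ ≤ 1) (hα₂0 : 0 < α₂) (hα₂1 : α₂ ≤ 1)
    (hεα : 4 * Real.pi ^ 2 * ε / (α₁ * α₂) < 1)
    (hd : 2 ≤ d) (hs : 2 ≤ s)
    (hW1 : ∀ i, i < d - 1 → WDC ε 1 (W1 i))
    (hW2 : ∀ i, i < s - 1 → WDC ε 1 (W2 i))
    (hWd : WDC ε α₁ Wd) (hWs : WDC ε α₂ Ws)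
    (hjoint : jointWDC ε (α₁ * α₂) Wd Ws) :
    ∀ hm ∈ Kset (nn 0) (pp 0), ∀ v : (Fin (nn 0) → ℝ) × (Fin (pp 0) → ℝ),
      ∃ D ≤ 0, HasOneSidedDeriv (fobj nn pp d s l W1 Wd W2 Ws h0 m0) hm v D := by
  intro hm hK v
  set G1 : (Fin (nn 0) → ℝ) → Fin l → ℝ := Gnet nn d l W1 Wd with hG1
  set G2 : (Fin (pp 0) → ℝ) → Fin l → ℝ := Gnet pp s l W2 Ws with hG2
  set c : Fin l → ℝ := G1 h0 * G2 m0 with hc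
  have hcn : ∀ i, 0 ≤ c i := fun i =>
    mul_nonneg (Gnet_nonneg nn d l W1 Wd h0 i) (Gnet_nonneg pp s l W2 Ws m0 i)
  have hfz : ∀ z, fobj nn pp d s l W1 Wd W2 Ws h0 m0 z
      = (1 / 2) * ∑ i, (c i - G1 z.1 i * G2 z.2 i) ^ 2 := by
    intro z
    unfold fobj
    rw [euclNorm_sq]
    simp only [Pi.sub_apply, Pi.mul_apply, ← hG1, ← hG2, ← hc]
  rcases hK with hK | hK
  · -- hm.2 = 0
    refine one_sided_aux _ hm v c (fun t => G1 (hm.1 + t • v.1) * G2 v.2) ?_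
      hcn (fun i => mul_nonneg (Gnet_nonneg _ _ _ _ _ _ _) (Gnet_nonneg _ _ _ _ _ _ _))
      ?_ ?_
    · exact (Continuous.comp (continuous_Gnet nn d l W1 Wd)
        (continuous_const.add (continuous_id.smul continuous_const))).mul continuous_const
    · intro t ht
      rw [hfz]
      congr 1
      refine Finset.sum_congr rfl fun i _ => ?_
      have h1 : (hm + t • v).1 = hm.1 + t • v.1 := rfl
      have h2 : (hm + t • v).2 = t • v.2 := by
        show hm.2 + t • v.2 = t • v.2
        rw [hK, zero_add]
      rw [h1, h2, hG2, Gnet_smul pp s l W2 Ws v.2 ht]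
      simp only [Pi.mul_apply, Pi.smul_apply, smul_eq_mul, ← hG2]
      ring
    · rw [hfz]
      congr 1
      refine Finset.sum_congr rfl fun i _ => ?_
      rw [hK, hG2, Gnet_zero]
      simp
  · -- hm.1 = 0
    refine one_sided_aux _ hm v c (fun t => G1 v.1 * G2 (hm.2 + t • v.2)) ?_
      hcn (fun i => mul_nonneg (Gnet_nonneg _ _ _ _ _ _ _) (Gnet_nonneg _ _ _ _ _ _ _))
      ?_ ?_
    · exact continuous_const.mul (Continuous.comp (continuous_Gnet pp s l W2 Ws)
        (continuous_const.add (continuous_id.smul continuous_const)))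
    · intro t ht
      rw [hfz]
      congr 1
      refine Finset.sum_congr rfl fun i _ => ?_
      have h1 : (hm + t • v).1 = t • v.1 := by
        show hm.1 + t • v.1 = t • v.1
        rw [hK, zero_add]
      have h2 : (hm + t • v).2 = hm.2 + t • v.2 := rfl
      rw [h1, h2, hG1, Gnet_smul nn d l W1 Wd v.1 ht]
      simp only [Pi.mul_apply, Pi.smul_apply, smul_eq_mul, ← hG1]
      ring
    · rw [hfz]
      congr 1
      refine Finset.sum_congr rfl fun i _ => ?_
      rw [hK, hG1, Gnet_zero]
      simp

end
end

section
/- Fix 0 < ε < 1. Let B ∈ ℝ^{ℓ×n} with rows b_i satisfy ‖B‖ ≤ 3√ℓ (spectral norm) and ‖b_i‖₂ ≤ 3√n for all i, and let C ∈ ℝ^{ℓ×p} have rows c_i with ‖c_i‖₂ ≤ 3√p for all i. Then for all unit vectors h, x, h̃, x̃ ∈ ℝ^n and all unit vectors m, y, m̃, ỹ ∈ ℝ^p: ‖G_{−ε}(h,x,m,y) − G_{−ε}(h̃,x̃,m̃,ỹ)‖ ≤ (729·ℓ·√n·p/ε)·(‖y−ỹ‖₂ + ‖m−m̃‖₂ +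 ‖x−x̃‖₂ + ‖h−h̃‖₂) in spectral norm. -/
open Real Filter Set Matrix MeasureTheory ProbabilityTheory

noncomputable section

/-- The function `t_{−ε}`. -/
def tneg (ε z : ℝ) : ℝ := if z ≤ -ε then 0 else if z ≤ 0 then 1 + z / ε else 1

/-- The function `t_{ε}`. -/
def tpos (ε z : ℝ) : ℝ := if z ≤ 0 then 0 else if z ≤ ε then z / ε else 1

/-- The matrix `G_{−ε}(h,x,m,y)`. -/
def Gneg {l n p : ℕ} (ε : ℝ) (B : Matrix (Fin l) (Fin n) ℝ) (C : Matrix (Fin l) (Fin p) ℝ)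
    (h x : Fin n → ℝ) (m y : Fin p → ℝ) : Matrix (Fin n) (Fin n) ℝ :=
  ∑ i, (tneg ε (dotp (B i) h) * tneg ε (dotp (B i) x)
      * max (dotp (C i) m) 0 * max (dotp (C i) y) 0) • Matrix.vecMulVec (B i) (B i)

/-- The matrix `G_{ε}(h,x,m,y)`. -/
def Gpos {l n p : ℕ} (ε : ℝ) (B : Matrix (Fin l) (Fin n) ℝ) (C : Matrix (Fin l) (Fin p) ℝ)
    (h x : Fin n → ℝ) (m y : Fin p → ℝ) : Matrix (Fin n) (Fin n) ℝ :=
  ∑ i, (tpos ε (dotp (B i) h) * tpos ε (dotp (B i) x)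
      * max (dotp (C i) m) 0 * max (dotp (C i) y) 0) • Matrix.vecMulVec (B i) (B i)


namespace S19

variable {M N : ℕ}

lemma euclNorm_nonneg (x : Fin N → ℝ) : 0 ≤ euclNorm x := Real.sqrt_nonneg _

lemma euclNorm_sq (x : Fin N → ℝ) : euclNorm x ^ 2 = ∑ i, (x i) ^ 2 :=
  Real.sq_sqrt (Finset.sum_nonneg fun i _ => sq_nonneg _)

lemma abs_dotp_le (x y : Fin N → ℝ) : |dotp x y| ≤ euclNorm x * euclNorm y := by
  have h := Finset.sum_mul_sq_le_sq_mul_sq Finset.univ x y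
  rw [← Real.sqrt_sq_eq_abs, euclNorm, euclNorm, ← Real.sqrt_mul (by positivity)]
  exact Real.sqrt_le_sqrt h

lemma dotp_sub (b x y : Fin N → ℝ) : dotp b (x - y) = dotp b x - dotp b y := by
  simp [dotp, mul_sub, Finset.sum_sub_distrib]

lemma euclNorm_smul (c : ℝ) (x : Fin N → ℝ) : euclNorm (c • x) = |c| * euclNorm x := by
  simp only [euclNorm, Pi.smul_apply, smul_eq_mul, mul_pow, ← Finset.mul_sum]
  rw [Real.sqrt_mul (sq_nonneg c), Real.sqrt_sq_eq_abs]

lemma euclNorm_pos {v : Fin N → ℝ} (hv : v ≠ 0) : 0 < euclNorm v := by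
  rcases (euclNorm_nonneg v).lt_or_eq with h | h
  · exact h
  · exfalso; apply hv
    have h0 : ∑ i, (v i) ^ 2 = 0 :=
      le_antisymm (Real.sqrt_eq_zero'.mp h.symm)
        (Finset.sum_nonneg fun i _ => sq_nonneg _)
    funext i
    have := (Finset.sum_eq_zero_iff_of_nonneg (fun i _ => sq_nonneg (v i))).mp h0 i
      (Finset.mem_univ i)
    exact pow_eq_zero_iff (n := 2) (by norm_num) |>.mp this

lemma euclNorm_le_of_abs_le {u w : Fin N → ℝ} {K : ℝ} (hK : 0 ≤ K)
    (h : ∀ i, |u i| ≤ K * |w i|) : euclNorm u ≤ K * euclNorm w := by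
  rw [euclNorm, euclNorm, ← Real.sqrt_sq hK, ← Real.sqrt_mul (sq_nonneg K), Finset.mul_sum]
  apply Real.sqrt_le_sqrt
  apply Finset.sum_le_sum
  intro i _
  calc (u i) ^ 2 = |u i| ^ 2 := (sq_abs _).symm
    _ ≤ (K * |w i|) ^ 2 := pow_le_pow_left₀ (abs_nonneg _) (h i) 2
    _ = K ^ 2 * (w i) ^ 2 := by rw [mul_pow, sq_abs]

lemma specSet_bddAbove (B : Matrix (Fin M) (Fin N) ℝ) :
    BddAbove {r : ℝ | ∃ v : Fin N → ℝ, euclNorm v ≤ 1 ∧ r = euclNorm (B.mulVec v)} := by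
  refine ⟨Real.sqrt (∑ i, euclNorm (B i) ^ 2), ?_⟩
  rintro r ⟨v, hv, rfl⟩
  rw [euclNorm]
  apply Real.sqrt_le_sqrt
  apply Finset.sum_le_sum
  intro i _
  have h1 : |dotp (B i) v| ≤ euclNorm (B i) * euclNorm v := abs_dotp_le _ _
  have h2 : (B.mulVec v i) = dotp (B i) v := rfl
  have hb : euclNorm v ^ 2 ≤ 1 := by nlinarith [euclNorm_nonneg v]
  rw [h2, ← sq_abs]
  calc |dotp (B i) v| ^ 2 ≤ (euclNorm (B i) * euclNorm v) ^ 2 :=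
      pow_le_pow_left₀ (abs_nonneg _) h1 2
    _ = euclNorm (B i) ^ 2 * euclNorm v ^ 2 := mul_pow _ _ _
    _ ≤ euclNorm (B i) ^ 2 * 1 := mul_le_mul_of_nonneg_left hb (sq_nonneg _)
    _ = euclNorm (B i) ^ 2 := mul_one _

lemma euclNorm_zero : euclNorm (0 : Fin N → ℝ) = 0 := by simp [euclNorm]

lemma specNorm_nonneg (B : Matrix (Fin M) (Fin N) ℝ) : 0 ≤ specNorm B := by
  apply le_csSup (specSet_bddAbove B)
  exact ⟨0, by simp [euclNorm_zero], by simp [euclNorm_zero]⟩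

lemma norm_mulVec_le (B : Matrix (Fin M) (Fin N) ℝ) (v : Fin N → ℝ) :
    euclNorm (B.mulVec v) ≤ specNorm B * euclNorm v := by
  rcases eq_or_ne v 0 with rfl | hv
  · simp only [Matrix.mulVec_zero, euclNorm_zero, mul_zero, le_refl]
  · have hpos := euclNorm_pos hv
    set c := (euclNorm v)⁻¹ with hc
    have hcpos : 0 < c := inv_pos.mpr hpos
    have hunit : euclNorm (c • v) = 1 := by
      rw [euclNorm_smul, abs_of_pos hcpos, hc]
      field_simp
    have hmem : euclNorm (B.mulVec (c • v)) ∈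
        {r : ℝ | ∃ w : Fin N → ℝ, euclNorm w ≤ 1 ∧ r = euclNorm (B.mulVec w)} :=
      ⟨c • v, le_of_eq hunit, rfl⟩
    have hle := le_csSup (specSet_bddAbove B) hmem
    rw [Matrix.mulVec_smul, euclNorm_smul, abs_of_pos hcpos] at hle
    have heq : euclNorm v * (c * euclNorm (B.mulVec v)) = euclNorm (B.mulVec v) := by
      rw [hc]; field_simp
    have h2 := mul_le_mul_of_nonneg_left hle hpos.le
    unfold specNorm
    unfold specNorm at h2
    linarith

lemma dotp_self (x : Fin N → ℝ) : dotp x x = euclNorm x ^ 2 := by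
  rw [euclNorm_sq]; simp [dotp, sq]

lemma dotp_transpose_mulVec (B : Matrix (Fin M) (Fin N) ℝ) (u : Fin M → ℝ) (z : Fin N → ℝ) :
    dotp (Bᵀ.mulVec u) z = dotp u (B.mulVec z) := by
  simp only [dotp, Matrix.mulVec, dotProduct, Matrix.transpose_apply]
  simp_rw [Finset.sum_mul, Finset.mul_sum]
  rw [Finset.sum_comm]
  exact Finset.sum_congr rfl fun i _ => Finset.sum_congr rfl fun j _ => by ring

lemma norm_transpose_mulVec_le (B : Matrix (Fin M) (Fin N) ℝ) (u : Fin M → ℝ) :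
    euclNorm (Bᵀ.mulVec u) ≤ specNorm B * euclNorm u := by
  set w := Bᵀ.mulVec u with hw
  have key : euclNorm w ^ 2 = dotp u (B.mulVec w) := by
    rw [← dotp_self, hw, dotp_transpose_mulVec]
  have h1 : dotp u (B.mulVec w) ≤ euclNorm u * (specNorm B * euclNorm w) := by
    calc dotp u (B.mulVec w) ≤ |dotp u (B.mulVec w)| := le_abs_self _
      _ ≤ euclNorm u * euclNorm (B.mulVec w) := abs_dotp_le _ _
      _ ≤ euclNorm u * (specNorm B * euclNorm w) :=
        mul_le_mul_of_nonneg_left (norm_mulVec_le B w) (euclNorm_nonneg u)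
  rcases (euclNorm_nonneg w).lt_or_eq with h | h
  · nlinarith [specNorm_nonneg B, euclNorm_nonneg u]
  · rw [← h]; exact mul_nonneg (specNorm_nonneg B) (euclNorm_nonneg u)

lemma tneg_eq {ε : ℝ} (hε : 0 < ε) (z : ℝ) : tneg ε z = min 1 (max 0 (1 + z / ε)) := by
  unfold tneg
  split_ifs with h1 h2
  · have hz : z / ε ≤ -1 := by rw [div_le_iff₀ hε]; linarith
    rw [max_eq_left (by linarith), min_eq_right (by norm_num)]
  · have hz1 : -1 ≤ z / ε := by rw [le_div_iff₀ hε]; linarith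
    have hz2 : z / ε ≤ 0 := by rw [div_le_iff₀ hε]; nlinarith
    rw [max_eq_right (by linarith), min_eq_right (by linarith)]
  · have hz : 0 ≤ z / ε := div_nonneg (by linarith) hε.le
    rw [max_eq_right (by linarith), min_eq_left (by linarith)]

lemma tneg_nonneg {ε : ℝ} (hε : 0 < ε) (z : ℝ) : 0 ≤ tneg ε z := by
  rw [tneg_eq hε]; exact le_min (by norm_num) (le_max_left _ _)

lemma tneg_le_one {ε : ℝ} (hε : 0 < ε) (z : ℝ) : tneg ε z ≤ 1 := by
  rw [tneg_eq hε]; exact min_le_left _ _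

lemma tneg_lip {ε : ℝ} (hε : 0 < ε) (z1 z2 : ℝ) :
    |tneg ε z1 - tneg ε z2| ≤ |z1 - z2| / ε := by
  rw [tneg_eq hε, tneg_eq hε]
  calc |min 1 (max 0 (1 + z1 / ε)) - min 1 (max 0 (1 + z2 / ε))|
      ≤ max |1 - 1| |max 0 (1 + z1 / ε) - max 0 (1 + z2 / ε)| :=
        abs_min_sub_min_le_max _ _ _ _
    _ = |max 0 (1 + z1 / ε) - max 0 (1 + z2 / ε)| := by
        rw [sub_self, abs_zero]; exact max_eq_right (abs_nonneg _)
    _ ≤ max |0 - 0| |(1 + z1 / ε) - (1 + z2 / ε)| := abs_max_sub_max_le_max _ _ _ _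
    _ = |z1 / ε - z2 / ε| := by
        rw [show (1 + z1 / ε) - (1 + z2 / ε) = z1 / ε - z2 / ε by ring, sub_self, abs_zero]
        exact max_eq_right (abs_nonneg _)
    _ = |z1 - z2| / ε := by rw [← sub_div, abs_div, abs_of_pos hε]

lemma prod4_diff {a1 a2 a3 a4 b1 b2 b3 b4 P : ℝ}
    (ha1 : 0 ≤ a1) (ha1' : a1 ≤ 1) (ha2 : 0 ≤ a2) (ha2' : a2 ≤ 1)
    (hb1 : 0 ≤ b1) (hb1' : b1 ≤ 1) (hb2 : 0 ≤ b2) (hb2' : b2 ≤ 1)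
    (ha3 : 0 ≤ a3) (ha3' : a3 ≤ P) (ha4 : 0 ≤ a4) (ha4' : a4 ≤ P)
    (hb3 : 0 ≤ b3) (hb3' : b3 ≤ P) (hb4 : 0 ≤ b4) (hb4' : b4 ≤ P) :
    |a1 * a2 * a3 * a4 - b1 * b2 * b3 * b4|
      ≤ |a1 - b1| * (P * P) + |a2 - b2| * (P * P) + |a3 - b3| * P + |a4 - b4| * P := by
  have hP : 0 ≤ P := le_trans ha3 ha3'
  have t1 : |(a1 - b1) * (a2 * a3 * a4)| ≤ |a1 - b1| * (P * P) := by
    rw [abs_mul]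
    refine mul_le_mul_of_nonneg_left ?_ (abs_nonneg _)
    rw [abs_of_nonneg (by positivity)]
    nlinarith [mul_nonneg ha3 ha4, mul_le_mul ha3' ha4' ha4 hP]
  have t2 : |b1 * ((a2 - b2) * (a3 * a4))| ≤ |a2 - b2| * (P * P) := by
    rw [abs_mul, abs_mul, abs_of_nonneg hb1, abs_of_nonneg (mul_nonneg ha3 ha4)]
    have h34 : a3 * a4 ≤ P * P := mul_le_mul ha3' ha4' ha4 hP
    nlinarith [abs_nonneg (a2 - b2), mul_nonneg (abs_nonneg (a2 - b2)) (mul_nonneg ha3 ha4),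
      mul_le_mul_of_nonneg_left h34 (abs_nonneg (a2 - b2))]
  have t3 : |b1 * b2 * ((a3 - b3) * a4)| ≤ |a3 - b3| * P := by
    rw [abs_mul, abs_mul, abs_mul, abs_of_nonneg hb1, abs_of_nonneg hb2, abs_of_nonneg ha4]
    nlinarith [abs_nonneg (a3 - b3), mul_nonneg (abs_nonneg (a3 - b3)) ha4,
      mul_le_mul_of_nonneg_left ha4' (abs_nonneg (a3 - b3)),
      mul_nonneg (mul_nonneg (abs_nonneg (a3 - b3)) ha4) hb2,
      mul_nonneg (abs_nonneg (a3 - b3)) hP]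
  have t4 : |b1 * b2 * b3 * (a4 - b4)| ≤ |a4 - b4| * P := by
    rw [abs_mul, abs_of_nonneg (by positivity : (0:ℝ) ≤ b1 * b2 * b3)]
    nlinarith [abs_nonneg (a4 - b4), mul_le_mul_of_nonneg_left hb3' (abs_nonneg (a4 - b4)),
      mul_nonneg (abs_nonneg (a4 - b4)) hb3,
      mul_nonneg (mul_nonneg (abs_nonneg (a4 - b4)) hb3) hb2,
      mul_nonneg (abs_nonneg (a4 - b4)) hP]
  have e : a1 * a2 * a3 * a4 - b1 * b2 * b3 * b4
      = (a1 - b1) * (a2 * a3 * a4) + (b1 * ((a2 - b2) * (a3 * a4))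
        + (b1 * b2 * ((a3 - b3) * a4) + b1 * b2 * b3 * (a4 - b4))) := by ring
  rw [e]
  have A1 := abs_add_le ((a1 - b1) * (a2 * a3 * a4))
    (b1 * ((a2 - b2) * (a3 * a4)) + (b1 * b2 * ((a3 - b3) * a4) + b1 * b2 * b3 * (a4 - b4)))
  have A2 := abs_add_le (b1 * ((a2 - b2) * (a3 * a4)))
    (b1 * b2 * ((a3 - b3) * a4) + b1 * b2 * b3 * (a4 - b4))
  have A3 := abs_add_le (b1 * b2 * ((a3 - b3) * a4)) (b1 * b2 * b3 * (a4 - b4))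
  linarith

lemma Gneg_sub_mulVec {l n p : ℕ} (ε : ℝ) (B : Matrix (Fin l) (Fin n) ℝ)
    (C : Matrix (Fin l) (Fin p) ℝ) (h x ht xt : Fin n → ℝ) (m y mt yt : Fin p → ℝ)
    (v : Fin n → ℝ) :
    (Gneg ε B C h x m y - Gneg ε B C ht xt mt yt).mulVec v =
      Bᵀ.mulVec (fun i =>
        ((tneg ε (dotp (B i) h) * tneg ε (dotp (B i) x)
            * max (dotp (C i) m) 0 * max (dotp (C i) y) 0)
          - (tneg ε (dotp (B i) ht) * tneg ε (dotp (B i) xt)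
            * max (dotp (C i) mt) 0 * max (dotp (C i) yt) 0)) * dotp (B i) v) := by
  funext j
  simp only [Gneg, Matrix.mulVec, dotProduct, Matrix.sub_apply, Matrix.sum_apply,
    Matrix.smul_apply, Matrix.vecMulVec_apply, smul_eq_mul, Matrix.transpose_apply, dotp]
  simp_rw [sub_mul, Finset.sum_mul, Finset.mul_sum, Finset.sum_sub_distrib]
  conv_lhs =>
    congr
    · rw [Finset.sum_comm]
    · rw [Finset.sum_comm]
  rw [← Finset.sum_sub_distrib]
  apply Finset.sum_congr rfl
  intro i _
  rw [mul_sub, Finset.mul_sum, Finset.mul_sum]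
  congr 1 <;> exact Finset.sum_congr rfl fun k _ => by ring

end S19

set_option maxHeartbeats 1000000 in
/-- Lipschitz bound for `G_{−ε}`. -/
theorem statement_19
    {l n p : ℕ} (ε : ℝ) (B : Matrix (Fin l) (Fin n) ℝ) (C : Matrix (Fin l) (Fin p) ℝ)
    (hε0 : 0 < ε) (hε1 : ε < 1)
    (hB : specNorm B ≤ 3 * Real.sqrt l)
    (hBrow : ∀ i, euclNorm (B i) ≤ 3 * Real.sqrt n)
    (hCrow : ∀ i, euclNorm (C i) ≤ 3 * Real.sqrt p) :
    ∀ h x ht xt : Fin n → ℝ, euclNorm h = 1 → euclNorm x = 1 → euclNorm ht = 1 →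
      euclNorm xt = 1 →
    ∀ m y mt yt : Fin p → ℝ, euclNorm m = 1 → euclNorm y = 1 → euclNorm mt = 1 →
      euclNorm yt = 1 →
      specNorm (Gneg ε B C h x m y - Gneg ε B C ht xt mt yt)
        ≤ 729 * (l : ℝ) * Real.sqrt n * (p : ℝ) / ε
            * (euclNorm (y - yt) + euclNorm (m - mt) + euclNorm (x - xt) + euclNorm (h - ht)) := by
  intro h x ht xt hh hx hht hxt m y mt yt hm hy hmt hyt
  have hn0 : 0 < n := by
    rcases Nat.eq_zero_or_pos n with rfl | h0
    · simp [euclNorm] at hh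
    · exact h0
  have hp0 : 0 < p := by
    rcases Nat.eq_zero_or_pos p with rfl | h0
    · simp [euclNorm] at hm
    · exact h0
  have hsn : (1 : ℝ) ≤ Real.sqrt n := by
    rw [show (1:ℝ) = Real.sqrt 1 from Real.sqrt_one.symm]
    exact Real.sqrt_le_sqrt (by exact_mod_cast hn0)
  have hp1 : (1 : ℝ) ≤ (p : ℝ) := by exact_mod_cast hp0
  have hpp : Real.sqrt p * Real.sqrt p = (p : ℝ) := Real.mul_self_sqrt (Nat.cast_nonneg p)
  have hll : Real.sqrt l * Real.sqrt l = (l : ℝ) := Real.mul_self_sqrt (Nat.cast_nonneg l)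
  set D := euclNorm (y - yt) + euclNorm (m - mt) + euclNorm (x - xt) + euclNorm (h - ht)
    with hDdef
  have hD0 : 0 ≤ D := by
    rw [hDdef]
    have n1 := S19.euclNorm_nonneg (y - yt); have n2 := S19.euclNorm_nonneg (m - mt)
    have n3 := S19.euclNorm_nonneg (x - xt); have n4 := S19.euclNorm_nonneg (h - ht)
    linarith
  set K := 27 * Real.sqrt n * (p : ℝ) / ε * D with hKdef
  have hK0 : 0 ≤ K := by
    rw [hKdef]; exact mul_nonneg (div_nonneg (by positivity) hε0.le) hD0
  have h9p : 9 * (p : ℝ) ≤ 27 * Real.sqrt n * p / ε := by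
    rw [le_div_iff₀ hε0]; nlinarith [hp1, hsn, hε1, hε0]
  have key : ∀ i : Fin l,
      |(tneg ε (dotp (B i) h) * tneg ε (dotp (B i) x)
          * max (dotp (C i) m) 0 * max (dotp (C i) y) 0)
        - (tneg ε (dotp (B i) ht) * tneg ε (dotp (B i) xt)
          * max (dotp (C i) mt) 0 * max (dotp (C i) yt) 0)| ≤ K := by
    intro i
    have hbd : ∀ w : Fin p → ℝ, euclNorm w = 1 → max (dotp (C i) w) 0 ≤ 3 * Real.sqrt p := by
      intro w hw
      apply max_le _ (by positivity)
      calc dotp (C i) w ≤ |dotp (C i) w| := le_abs_self _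
        _ ≤ euclNorm (C i) * euclNorm w := S19.abs_dotp_le _ _
        _ ≤ 3 * Real.sqrt p := by rw [hw, mul_one]; exact hCrow i
    have step := S19.prod4_diff (P := 3 * Real.sqrt p)
      (a1 := tneg ε (dotp (B i) h)) (a2 := tneg ε (dotp (B i) x))
      (a3 := max (dotp (C i) m) 0) (a4 := max (dotp (C i) y) 0)
      (b1 := tneg ε (dotp (B i) ht)) (b2 := tneg ε (dotp (B i) xt))
      (b3 := max (dotp (C i) mt) 0) (b4 := max (dotp (C i) yt) 0)
      (S19.tneg_nonneg hε0 _) (S19.tneg_le_one hε0 _)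
      (S19.tneg_nonneg hε0 _) (S19.tneg_le_one hε0 _)
      (S19.tneg_nonneg hε0 _) (S19.tneg_le_one hε0 _)
      (S19.tneg_nonneg hε0 _) (S19.tneg_le_one hε0 _)
      (le_max_right _ _) (hbd m hm) (le_max_right _ _) (hbd y hy)
      (le_max_right _ _) (hbd mt hmt) (le_max_right _ _) (hbd yt hyt)
    have e1 : |tneg ε (dotp (B i) h) - tneg ε (dotp (B i) ht)|
        ≤ 3 * Real.sqrt n * euclNorm (h - ht) / ε := by
      refine (S19.tneg_lip hε0 _ _).trans ?_
      apply (div_le_div_iff_of_pos_right hε0).mpr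
      rw [← S19.dotp_sub]
      exact (S19.abs_dotp_le _ _).trans
        (mul_le_mul_of_nonneg_right (hBrow i) (S19.euclNorm_nonneg _))
    have e2 : |tneg ε (dotp (B i) x) - tneg ε (dotp (B i) xt)|
        ≤ 3 * Real.sqrt n * euclNorm (x - xt) / ε := by
      refine (S19.tneg_lip hε0 _ _).trans ?_
      apply (div_le_div_iff_of_pos_right hε0).mpr
      rw [← S19.dotp_sub]
      exact (S19.abs_dotp_le _ _).trans
        (mul_le_mul_of_nonneg_right (hBrow i) (S19.euclNorm_nonneg _))
    have e3 : |max (dotp (C i) m) 0 - max (dotp (C i) mt) 0|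
        ≤ 3 * Real.sqrt p * euclNorm (m - mt) := by
      refine (abs_max_sub_max_le_abs _ _ _).trans ?_
      rw [← S19.dotp_sub]
      exact (S19.abs_dotp_le _ _).trans
        (mul_le_mul_of_nonneg_right (hCrow i) (S19.euclNorm_nonneg _))
    have e4 : |max (dotp (C i) y) 0 - max (dotp (C i) yt) 0|
        ≤ 3 * Real.sqrt p * euclNorm (y - yt) := by
      refine (abs_max_sub_max_le_abs _ _ _).trans ?_
      rw [← S19.dotp_sub]
      exact (S19.abs_dotp_le _ _).trans
        (mul_le_mul_of_nonneg_right (hCrow i) (S19.euclNorm_nonneg _))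
    have S1 := mul_le_mul_of_nonneg_right e1
      (by positivity : (0:ℝ) ≤ 3 * Real.sqrt p * (3 * Real.sqrt p))
    have S2 := mul_le_mul_of_nonneg_right e2
      (by positivity : (0:ℝ) ≤ 3 * Real.sqrt p * (3 * Real.sqrt p))
    have S3 := mul_le_mul_of_nonneg_right e3 (by positivity : (0:ℝ) ≤ 3 * Real.sqrt p)
    have S4 := mul_le_mul_of_nonneg_right e4 (by positivity : (0:ℝ) ≤ 3 * Real.sqrt p)
    refine step.trans ((add_le_add (add_le_add (add_le_add S1 S2) S3) S4).trans ?_)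
    have E1 : 3 * Real.sqrt n * euclNorm (h - ht) / ε * (3 * Real.sqrt p * (3 * Real.sqrt p))
        = 27 * Real.sqrt n * p * euclNorm (h - ht) / ε := by
      linear_combination (27 * Real.sqrt n * euclNorm (h - ht) / ε) * hpp
    have E2 : 3 * Real.sqrt n * euclNorm (x - xt) / ε * (3 * Real.sqrt p * (3 * Real.sqrt p))
        = 27 * Real.sqrt n * p * euclNorm (x - xt) / ε := by
      linear_combination (27 * Real.sqrt n * euclNorm (x - xt) / ε) * hpp
    have E3 : 3 * Real.sqrt p * euclNorm (m - mt) * (3 * Real.sqrt p)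
        = 9 * p * euclNorm (m - mt) := by
      linear_combination (9 * euclNorm (m - mt)) * hpp
    have E4 : 3 * Real.sqrt p * euclNorm (y - yt) * (3 * Real.sqrt p)
        = 9 * p * euclNorm (y - yt) := by
      linear_combination (9 * euclNorm (y - yt)) * hpp
    rw [E1, E2, E3, E4, hKdef, hDdef]
    have n1 := S19.euclNorm_nonneg (y - yt); have n2 := S19.euclNorm_nonneg (m - mt)
    have n3 := S19.euclNorm_nonneg (x - xt); have n4 := S19.euclNorm_nonneg (h - ht)
    have g1 := mul_le_mul_of_nonneg_right h9p n1
    have g2 := mul_le_mul_of_nonneg_right h9p n2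
    have d1 : 27 * Real.sqrt n * p * euclNorm (h - ht) / ε
        = 27 * Real.sqrt n * p / ε * euclNorm (h - ht) := by ring
    have d2 : 27 * Real.sqrt n * p * euclNorm (x - xt) / ε
        = 27 * Real.sqrt n * p / ε * euclNorm (x - xt) := by ring
    rw [d1, d2, mul_add, mul_add, mul_add]
    linarith [g1, g2]
  unfold specNorm
  apply Real.sSup_le
  · rintro r ⟨v, hv, rfl⟩
    rw [S19.Gneg_sub_mulVec]
    have h1 : euclNorm (B.mulVec v) ≤ 3 * Real.sqrt l := by
      calc euclNorm (B.mulVec v) ≤ specNorm B * euclNorm v := S19.norm_mulVec_le B v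
        _ ≤ specNorm B * 1 := mul_le_mul_of_nonneg_left hv (S19.specNorm_nonneg B)
        _ = specNorm B := mul_one _
        _ ≤ 3 * Real.sqrt l := hB
    have h2 : euclNorm (fun i =>
        ((tneg ε (dotp (B i) h) * tneg ε (dotp (B i) x)
            * max (dotp (C i) m) 0 * max (dotp (C i) y) 0)
          - (tneg ε (dotp (B i) ht) * tneg ε (dotp (B i) xt)
            * max (dotp (C i) mt) 0 * max (dotp (C i) yt) 0)) * dotp (B i) v)
        ≤ K * euclNorm (B.mulVec v) := by
      apply S19.euclNorm_le_of_abs_le hK0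
      intro i
      show |((tneg ε (dotp (B i) h) * tneg ε (dotp (B i) x)
            * max (dotp (C i) m) 0 * max (dotp (C i) y) 0)
          - (tneg ε (dotp (B i) ht) * tneg ε (dotp (B i) xt)
            * max (dotp (C i) mt) 0 * max (dotp (C i) yt) 0)) * dotp (B i) v|
        ≤ K * |B.mulVec v i|
      rw [abs_mul]
      exact mul_le_mul_of_nonneg_right (key i) (abs_nonneg _)
    have h4 : euclNorm (fun i =>
        ((tneg ε (dotp (B i) h) * tneg ε (dotp (B i) x)
            * max (dotp (C i) m) 0 * max (dotp (C i) y) 0)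
          - (tneg ε (dotp (B i) ht) * tneg ε (dotp (B i) xt)
            * max (dotp (C i) mt) 0 * max (dotp (C i) yt) 0)) * dotp (B i) v)
        ≤ K * (3 * Real.sqrt l) :=
      h2.trans (mul_le_mul_of_nonneg_left h1 hK0)
    calc euclNorm (Bᵀ.mulVec (fun i =>
        ((tneg ε (dotp (B i) h) * tneg ε (dotp (B i) x)
            * max (dotp (C i) m) 0 * max (dotp (C i) y) 0)
          - (tneg ε (dotp (B i) ht) * tneg ε (dotp (B i) xt)
            * max (dotp (C i) mt) 0 * max (dotp (C i) yt) 0)) * dotp (B i) v))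
        ≤ specNorm B * (K * (3 * Real.sqrt l)) :=
          (S19.norm_transpose_mulVec_le B _).trans
            (mul_le_mul_of_nonneg_left h4 (S19.specNorm_nonneg B))
      _ ≤ (3 * Real.sqrt l) * (K * (3 * Real.sqrt l)) :=
          mul_le_mul_of_nonneg_right hB (mul_nonneg hK0 (by positivity))
      _ = 9 * l * K := by linear_combination (9 * K) * hll
      _ ≤ 729 * (l : ℝ) * Real.sqrt n * p / ε * D := by
          rw [hKdef]
          have hc : (0:ℝ) ≤ (l : ℝ) * Real.sqrt n * p / ε * D :=
            mul_nonneg (div_nonneg (by positivity) hε0.le) hD0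
          have hr : 729 * (l : ℝ) * Real.sqrt n * p / ε * D
              - 9 * l * (27 * Real.sqrt n * p / ε * D)
              = 486 * ((l : ℝ) * Real.sqrt n * p / ε * D) := by ring
          linarith [hc, hr]
  · exact mul_nonneg (div_nonneg (by positivity) hε0.le) hD0


end
end
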